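/- Let Z ⊂ P^d be an irreducible two-dimensional cone with vertex v. If there exists a point v' ∈ Z with v' ≠ v such that Z is also a cone with vertex v', then Z is a projective plane. -/

import Mathlib

/-!
STATEMENT 3: Let `Z ⊂ ℙ^d` be an irreducible two-dimensional cone with vertex `v`.
If there is a point `v' ∈ Z`, `v' ≠ v`, such that `Z` is also a cone with vertex `v'`,
then `Z` is a projective plane.

We set up complex projective space `ℙ^d` as `Projectivization ℂ (Fin (d+1) → ℂ)`,
with its Zariski-closed subsets (common zero loci of homogeneous polynomials),
irreducibility, and dimension (via chains of irreducible closed subsets).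
-/

noncomputable section

abbrev ProjSpace (d : ℕ) := Projectivization ℂ (Fin (d + 1) → ℂ)

/-- A homogeneous polynomial vanishes at a projective point (tested on the chosen
representative; for homogeneous polynomials this is independent of the choice). -/
def VanishesAt {d : ℕ} (f : MvPolynomial (Fin (d + 1)) ℂ) (x : ProjSpace d) : Prop :=
  MvPolynomial.eval x.rep f = 0

/-- Zariski-closed subsets of projective space: common zero loci of sets of
homogeneous polynomials. -/
def IsZarClosed {d : ℕ} (Z : Set (ProjSpace d)) : Prop :=
  ∃ S : Set (MvPolynomial (Fin (d + 1)) ℂ),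
    (∀ f ∈ S, ∃ k : ℕ, f.IsHomogeneous k) ∧ Z = {x | ∀ f ∈ S, VanishesAt f x}

/-- An irreducible (nonempty) Zariski-closed subset. -/
def IsIrredClosed {d : ℕ} (Z : Set (ProjSpace d)) : Prop :=
  IsZarClosed Z ∧ Z.Nonempty ∧
    ∀ Z₁ Z₂ : Set (ProjSpace d), IsZarClosed Z₁ → IsZarClosed Z₂ →
      Z ⊆ Z₁ ∪ Z₂ → Z ⊆ Z₁ ∨ Z ⊆ Z₂

/-- `Z` has dimension at least `m`: there is a strictly increasing chain of `m+1`
irreducible closed subsets contained in `Z`. -/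
def DimGE {d : ℕ} (Z : Set (ProjSpace d)) (m : ℕ) : Prop :=
  ∃ c : Fin (m + 1) → Set (ProjSpace d),
    (∀ i, IsIrredClosed (c i)) ∧ StrictMono c ∧ c (Fin.last m) ⊆ Z

/-- `Z` has dimension exactly `m`. -/
def HasDim {d : ℕ} (Z : Set (ProjSpace d)) (m : ℕ) : Prop :=
  DimGE Z m ∧ ¬ DimGE Z (m + 1)

/-- The projective linear subvariety associated to a linear subspace `W`. -/
def LinearSubvariety {d : ℕ} (W : Submodule ℂ (Fin (d + 1) → ℂ)) : Set (ProjSpace d) :=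
  {x | x.submodule ≤ W}

/-- The projective line through two points. -/
def lineThrough {d : ℕ} (v z : ProjSpace d) : Set (ProjSpace d) :=
  LinearSubvariety (v.submodule ⊔ z.submodule)

/-- `Z` is a cone with vertex `v`: `v ∈ Z` and for every `z ∈ Z` the line through
`v` and `z` is contained in `Z`. -/
def IsConeWithVertex {d : ℕ} (Z : Set (ProjSpace d)) (v : ProjSpace d) : Prop :=
  v ∈ Z ∧ ∀ z ∈ Z, lineThrough v z ⊆ Z

/-- A projective plane: the projectivization of a 3-dimensional linear subspace. -/
def IsPlane {d : ℕ} (Z : Set (ProjSpace d)) : Prop :=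
  ∃ W : Submodule ℂ (Fin (d + 1) → ℂ), Module.finrank ℂ W = 3 ∧ Z = LinearSubvariety W

/-- A projective line: the projectivization of a 2-dimensional linear subspace. -/
def IsLine {d : ℕ} (L : Set (ProjSpace d)) : Prop :=
  ∃ W : Submodule ℂ (Fin (d + 1) → ℂ), Module.finrank ℂ W = 2 ∧ L = LinearSubvariety W


open MvPolynomial Projectivization Module Submodule

section Aux
variable {d : ℕ}

lemma eval_smul_of_isHomogeneous {k : ℕ} {f : MvPolynomial (Fin (d+1)) ℂ}
    (hf : f.IsHomogeneous k) (c : ℂ) (u : Fin (d+1) → ℂ) :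
    eval (c • u) f = c ^ k * eval u f := by
  rw [eval_eq, eval_eq, Finset.mul_sum]
  refine Finset.sum_congr rfl fun e he => ?_
  have hdeg : ∑ i ∈ e.support, e i = k := by
    have := hf (mem_support_iff.mp he)
    simpa [Finsupp.weight, Finsupp.linearCombination, Finsupp.sum] using this
  calc f.coeff e * ∏ i ∈ e.support, (c • u) i ^ e i
      = f.coeff e * ((∏ i ∈ e.support, c ^ e i) * ∏ i ∈ e.support, u i ^ e i) := by
        rw [← Finset.prod_mul_distrib]
        simp [mul_pow]
    _ = c ^ k * (f.coeff e * ∏ i ∈ e.support, u i ^ e i) := by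
        rw [Finset.prod_pow_eq_pow_sum, hdeg]; ring

lemma vanishesAt_mk {k : ℕ} {f : MvPolynomial (Fin (d+1)) ℂ} (hf : f.IsHomogeneous k)
    {u : Fin (d+1) → ℂ} (hu : u ≠ 0) :
    VanishesAt f (Projectivization.mk ℂ u hu) ↔ eval u f = 0 := by
  obtain ⟨a, ha⟩ := exists_smul_eq_mk_rep ℂ u hu
  unfold VanishesAt
  rw [← ha]
  have : ((a : ℂ) • u) = ((a : ℂ) • u) := rfl
  rw [show ((a : ℂˣ) • u) = ((a : ℂ) • u) from rfl,
    eval_smul_of_isHomogeneous hf]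
  constructor
  · intro h
    rcases mul_eq_zero.mp h with h | h
    · exact absurd h (pow_ne_zero _ a.ne_zero)
    · exact h
  · intro h; rw [h, mul_zero]

lemma mem_linearSubvariety {W : Submodule ℂ (Fin (d+1) → ℂ)} {x : ProjSpace d} :
    x ∈ LinearSubvariety W ↔ x.rep ∈ W := by
  rw [LinearSubvariety, Set.mem_setOf_eq, submodule_eq, Submodule.span_singleton_le_iff_mem]

lemma mk_mem_linearSubvariety {W : Submodule ℂ (Fin (d+1) → ℂ)} {u : Fin (d+1) → ℂ}
    (hu : u ≠ 0) : Projectivization.mk ℂ u hu ∈ LinearSubvariety W ↔ u ∈ W := by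
  rw [LinearSubvariety, Set.mem_setOf_eq, submodule_mk, Submodule.span_singleton_le_iff_mem]

end Aux
section Aux2
variable {d : ℕ}

lemma eval_aeval_mv {σ τ : Type} (g : σ → MvPolynomial τ ℂ) (y : τ → ℂ)
    (f : MvPolynomial σ ℂ) :
    eval y (aeval g f) = eval (fun i => eval y (g i)) f := by
  induction f using MvPolynomial.induction_on with
  | C a => simp
  | add p q hp hq => simp only [map_add, hp, hq]
  | mul_X p i hp => simp only [map_mul, aeval_X, eval_X, hp]

lemma eval_aeval_poly {σ : Type} (g : σ → Polynomial ℂ) (s : ℂ)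
    (f : MvPolynomial σ ℂ) :
    Polynomial.eval s (aeval g f) = eval (fun i => Polynomial.eval s (g i)) f := by
  induction f using MvPolynomial.induction_on with
  | C a => simp
  | add p q hp hq => simp [hp, hq]
  | mul_X p i hp => simp [hp]

/-- the linear polynomial attached to a dual vector -/
def linPoly (φ : Module.Dual ℂ (Fin (d+1) → ℂ)) : MvPolynomial (Fin (d+1)) ℂ :=
  ∑ i, MvPolynomial.C (φ (Pi.single i 1)) * MvPolynomial.X i

lemma eval_linPoly (φ : Module.Dual ℂ (Fin (d+1) → ℂ)) (u : Fin (d+1) → ℂ) :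
    eval u (linPoly φ) = φ u := by
  have hu : u = ∑ i, u i • (Pi.single i 1 : Fin (d+1) → ℂ) := by
    funext j
    simp [Finset.sum_apply, Pi.single_apply]
  rw [linPoly]
  conv_rhs => rw [hu]
  rw [map_sum]
  simp [mul_comm]

lemma linPoly_isHomogeneous (φ : Module.Dual ℂ (Fin (d+1) → ℂ)) :
    (linPoly φ).IsHomogeneous 1 := by
  apply MvPolynomial.IsHomogeneous.sum
  intro i _
  simpa using (MvPolynomial.isHomogeneous_C _ (φ (Pi.single i 1))).mul
    (MvPolynomial.isHomogeneous_X ℂ i)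

lemma isZarClosed_linearSubvariety (W : Submodule ℂ (Fin (d+1) → ℂ)) :
    IsZarClosed (LinearSubvariety W) := by
  refine ⟨linPoly '' (W.dualAnnihilator : Set _), ?_, ?_⟩
  · rintro f ⟨φ, _, rfl⟩
    exact ⟨1, linPoly_isHomogeneous φ⟩
  · ext x
    rw [mem_linearSubvariety]
    constructor
    · rintro hx f ⟨φ, hφ, rfl⟩
      show eval x.rep (linPoly φ) = 0
      rw [eval_linPoly]
      exact (Submodule.mem_dualAnnihilator φ).mp hφ _ hx
    · intro hx
      rw [← Subspace.dualAnnihilator_dualCoannihilator_eq (W := W),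
        Submodule.mem_dualCoannihilator]
      intro φ hφ
      have := hx (linPoly φ) ⟨φ, hφ, rfl⟩
      rwa [VanishesAt, eval_linPoly] at this

end Aux2
section Aux3
variable {d : ℕ}

lemma IsZarClosed.union {Z₁ Z₂ : Set (ProjSpace d)} (h₁ : IsZarClosed Z₁)
    (h₂ : IsZarClosed Z₂) : IsZarClosed (Z₁ ∪ Z₂) := by
  obtain ⟨S, hS, rfl⟩ := h₁
  obtain ⟨T, hT, rfl⟩ := h₂
  refine ⟨{h | ∃ f ∈ S, ∃ g ∈ T, h = f * g}, ?_, ?_⟩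
  · rintro h ⟨f, hf, g, hg, rfl⟩
    obtain ⟨kf, hkf⟩ := hS f hf
    obtain ⟨kg, hkg⟩ := hT g hg
    exact ⟨kf + kg, hkf.mul hkg⟩
  · ext x
    constructor
    · rintro (hx | hx) <;> rintro h ⟨f, hf, g, hg, rfl⟩ <;>
        show eval x.rep (f * g) = 0 <;> rw [map_mul]
      · rw [hx f hf, zero_mul]
      · rw [hx g hg, mul_zero]
    · intro hx
      by_cases hxS : ∀ f ∈ S, VanishesAt f x
      · exact Or.inl hxS
      · push_neg at hxS
        obtain ⟨f, hf, hfx⟩ := hxS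
        refine Or.inr fun g hg => ?_
        have := hx (f * g) ⟨f, hf, g, hg, rfl⟩
        rw [VanishesAt, map_mul] at this
        rcases mul_eq_zero.mp this with h | h
        · exact absurd h hfx
        · exact h

lemma isZarClosed_empty : IsZarClosed (∅ : Set (ProjSpace d)) := by
  refine ⟨{1}, ?_, ?_⟩
  · intro f hf
    rw [Set.mem_singleton_iff] at hf
    subst hf
    exact ⟨0, MvPolynomial.isHomogeneous_one _ _⟩
  · ext x
    simp [VanishesAt]

lemma singleton_eq_linearSubvariety (p : ProjSpace d) :
    {p} = LinearSubvariety p.submodule := by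
  ext x
  rw [Set.mem_singleton_iff, mem_linearSubvariety, submodule_eq,
    Submodule.mem_span_singleton]
  constructor
  · rintro rfl; exact ⟨1, one_smul _ _⟩
  · rintro ⟨c, hc⟩
    have hc0 : c ≠ 0 := by
      rintro rfl
      exact x.rep_nonzero (by rw [← hc, zero_smul])
    rw [← mk_rep x, ← mk_rep p]
    rw [mk_eq_mk_iff']
    exact ⟨c, hc⟩

lemma isZarClosed_singleton (p : ProjSpace d) : IsZarClosed ({p} : Set (ProjSpace d)) := by
  rw [singleton_eq_linearSubvariety]
  exact isZarClosed_linearSubvariety _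

lemma Set.Finite.isZarClosed {Z : Set (ProjSpace d)} (hZ : Z.Finite) : IsZarClosed Z := by
  refine Set.Finite.induction_on (motive := fun Z _ => IsZarClosed Z) Z hZ isZarClosed_empty ?_
  intro a s _ _ ih
  rw [Set.insert_eq]
  exact (isZarClosed_singleton _).union ih

end Aux3
section Aux4
variable {d : ℕ}

/-- Evaluating a homogeneous polynomial of positive total degree sum at 0 is 0,
and for degree-0 it is constant. -/
lemma eval_zero_of_isHomogeneous_pos {k : ℕ} {f : MvPolynomial (Fin (d+1)) ℂ}
    (hf : f.IsHomogeneous k) (hk : 0 < k) : eval (0 : Fin (d+1) → ℂ) f = 0 := by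
  have := eval_smul_of_isHomogeneous hf 0 0
  rw [smul_zero, zero_pow hk.ne', zero_mul] at this
  exact this

lemma eval_const_of_isHomogeneous_zero {f : MvPolynomial (Fin (d+1)) ℂ}
    (hf : f.IsHomogeneous 0) (u w : Fin (d+1) → ℂ) : eval u f = eval w f := by
  have hu := eval_smul_of_isHomogeneous hf 0 u
  have hw := eval_smul_of_isHomogeneous hf 0 w
  rw [zero_smul, pow_zero, one_mul] at hu hw
  rw [← hu, hw]

lemma isIrredClosed_linearSubvariety {W : Submodule ℂ (Fin (d+1) → ℂ)} (hW : W ≠ ⊥) :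
    IsIrredClosed (LinearSubvariety W) := by
  refine ⟨isZarClosed_linearSubvariety W, ?_, ?_⟩
  · obtain ⟨u, huW, hu⟩ := Submodule.exists_mem_ne_zero_of_ne_bot hW
    exact ⟨Projectivization.mk ℂ u hu, (mk_mem_linearSubvariety hu).mpr huW⟩
  · intro Z₁ Z₂ h₁ h₂ hsub
    by_contra hcon
    push_neg at hcon
    obtain ⟨hn₁, hn₂⟩ := hcon
    obtain ⟨S, hS, rfl⟩ := h₁
    obtain ⟨T, hT, rfl⟩ := h₂
    rw [Set.not_subset] at hn₁ hn₂
    obtain ⟨x, hxW, hx₁⟩ := hn₁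
    obtain ⟨y, hyW, hy₂⟩ := hn₂
    rw [Set.mem_setOf_eq] at hx₁ hy₂
    push_neg at hx₁ hy₂
    obtain ⟨f, hfS, hfx⟩ := hx₁
    obtain ⟨g, hgT, hgy⟩ := hy₂
    obtain ⟨kf, hkf⟩ := hS f hfS
    obtain ⟨kg, hkg⟩ := hT g hgT
    rw [VanishesAt] at hfx hgy
    have hxW' : x.rep ∈ W := mem_linearSubvariety.mp hxW
    have hyW' : y.rep ∈ W := mem_linearSubvariety.mp hyW
    -- every point of LV W kills f or g
    have hvan : ∀ u ∈ W, u ≠ 0 → eval u f = 0 ∨ eval u g = 0 := by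
      intro u huW hu
      have hz : Projectivization.mk ℂ u hu ∈ LinearSubvariety W :=
        (mk_mem_linearSubvariety hu).mpr huW
      rcases hsub hz with h | h
      · exact Or.inl ((vanishesAt_mk hkf hu).mp (h f hfS))
      · exact Or.inr ((vanishesAt_mk hkg hu).mp (h g hgT))
    -- degree zero cases
    by_cases hkf0 : kf = 0
    · subst hkf0
      rcases hvan y.rep hyW' y.rep_nonzero with h | h
      · rw [eval_const_of_isHomogeneous_zero hkf y.rep x.rep] at h
        exact hfx h
      · exact hgy h
    by_cases hkg0 : kg = 0
    · subst hkg0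
      rcases hvan x.rep hxW' x.rep_nonzero with h | h
      · exact hfx h
      · rw [eval_const_of_isHomogeneous_zero hkg x.rep y.rep] at h
        exact hgy h
    -- restriction to W via a basis
    set r := Module.finrank ℂ W with hr
    let B : Basis (Fin r) ℂ W := Module.finBasis ℂ W
    let w : Fin r → (Fin (d+1) → ℂ) := fun j => (B j : Fin (d+1) → ℂ)
    let Avec : (Fin r → ℂ) → (Fin (d+1) → ℂ) := fun y => ∑ j, y j • w j
    have hAmem : ∀ y, Avec y ∈ W := fun y =>
      Submodule.sum_mem _ fun j _ => Submodule.smul_mem _ _ (B j).2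
    have hAsurj : ∀ u ∈ W, ∃ y, Avec y = u := by
      intro u hu
      refine ⟨fun j => B.repr ⟨u, hu⟩ j, ?_⟩
      have := B.sum_repr ⟨u, hu⟩
      calc Avec (fun j => B.repr ⟨u, hu⟩ j)
          = ((∑ j, B.repr ⟨u, hu⟩ j • B j : W) : Fin (d+1) → ℂ) := by
            simp only [Avec, w, Submodule.coe_sum, Submodule.coe_smul]
        _ = u := by rw [this]
    let res : MvPolynomial (Fin (d+1)) ℂ → MvPolynomial (Fin r) ℂ :=
      fun h => aeval (fun i => ∑ j, MvPolynomial.C (w j i) * MvPolynomial.X j) h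
    have hres : ∀ (y : Fin r → ℂ) (h : MvPolynomial (Fin (d+1)) ℂ),
        eval y (res h) = eval (Avec y) h := by
      intro y h
      show eval y (aeval (fun i => ∑ j, MvPolynomial.C (w j i) * MvPolynomial.X j) h)
        = eval (Avec y) h
      rw [eval_aeval_mv]
      have harg : (fun i => eval y (∑ j, MvPolynomial.C (w j i) * MvPolynomial.X j))
          = Avec y := by
        funext i
        simp [Avec, Finset.sum_apply, mul_comm]
      rw [harg]
    have hfg0 : res (f * g) = 0 := by
      apply MvPolynomial.funext
      intro y
      rw [map_zero, hres]
      by_cases hAy : Avec y = 0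
      · rw [hAy, map_mul]
        rw [eval_zero_of_isHomogeneous_pos hkf (Nat.pos_of_ne_zero hkf0), zero_mul]
      · rcases hvan (Avec y) (hAmem y) hAy with h | h <;> rw [map_mul]
        · rw [h, zero_mul]
        · rw [h, mul_zero]
    have hsplit : res f * res g = 0 := by
      rw [← hfg0]; exact (map_mul (aeval _) f g).symm
    rcases mul_eq_zero.mp hsplit with h | h
    · obtain ⟨y, hy⟩ := hAsurj x.rep hxW'
      have := hres y f
      rw [h, map_zero, hy] at this
      exact hfx this.symm
    · obtain ⟨y, hy⟩ := hAsurj y.rep hyW'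
      have := hres y g
      rw [h, map_zero, hy] at this
      exact hgy this.symm

end Aux4
section Aux5
variable {d : ℕ}

lemma line_finite_zeros {W : Submodule ℂ (Fin (d+1) → ℂ)} (hW : Module.finrank ℂ W = 2)
    {f : MvPolynomial (Fin (d+1)) ℂ} {k : ℕ} (hf : f.IsHomogeneous k)
    (hx : ∃ x ∈ LinearSubvariety W, eval x.rep f ≠ 0) :
    {z | z ∈ LinearSubvariety W ∧ VanishesAt f z}.Finite := by
  classical
  let B : Basis (Fin 2) ℂ W := Module.finBasisOfFinrankEq ℂ W hW
  set a : Fin (d+1) → ℂ := ((B 0 : W) : Fin (d+1) → ℂ) with ha_def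
  set b : Fin (d+1) → ℂ := ((B 1 : W) : Fin (d+1) → ℂ) with hb_def
  have haW : a ∈ W := (B 0).2
  have hbW : b ∈ W := (B 1).2
  have hli : LinearIndependent ℂ (fun j : Fin 2 => ((B j : W) : Fin (d+1) → ℂ)) :=
    B.linearIndependent.map' W.subtype (Submodule.ker_subtype W)
  have hcomb : ∀ s t : ℂ, s • a + t • b = 0 → s = 0 ∧ t = 0 := by
    intro s t hst
    have := Fintype.linearIndependent_iff.mp hli ![s, t] ?_
    · exact ⟨this 0, this 1⟩
    · rw [Fin.sum_univ_two]
      simp only [Matrix.cons_val_zero, Matrix.cons_val_one, Matrix.head_cons]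
      exact hst
  have ha0 : a ≠ 0 := by
    intro h
    have h10 : (1:ℂ) • a + (0:ℂ) • b = 0 := by
      rw [one_smul, zero_smul, add_zero, h]
    exact one_ne_zero (hcomb 1 0 h10).1
  have hsb0 : ∀ s : ℂ, s • a + b ≠ 0 := by
    intro s h
    exact one_ne_zero (hcomb s 1 (by simpa using h)).2
  -- decomposition of points of the line
  have hdec : ∀ z : ProjSpace d, z ∈ LinearSubvariety W →
      ∃ c0 c1 : ℂ, z.rep = c0 • a + c1 • b := by
    intro z hz
    have hzW : z.rep ∈ W := mem_linearSubvariety.mp hz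
    refine ⟨B.repr ⟨z.rep, hzW⟩ 0, B.repr ⟨z.rep, hzW⟩ 1, ?_⟩
    have := B.sum_repr ⟨z.rep, hzW⟩
    have h2 : ((∑ j, B.repr ⟨z.rep, hzW⟩ j • B j : W) : Fin (d+1) → ℂ) = z.rep := by
      rw [this]
    simp only [Fin.sum_univ_two, Submodule.coe_add, SetLike.val_smul] at h2
    exact h2.symm
  -- the one-variable restrictions
  let ψ : Polynomial ℂ :=
    aeval (fun i => Polynomial.C (a i) * Polynomial.X + Polynomial.C (b i)) f
  have hψ : ∀ s : ℂ, ψ.eval s = eval (s • a + b) f := by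
    intro s
    have h1 := eval_aeval_poly
      (fun i => Polynomial.C (a i) * Polynomial.X + Polynomial.C (b i)) s f
    have harg : (fun i => Polynomial.eval s
        (Polynomial.C (a i) * Polynomial.X + Polynomial.C (b i))) = s • a + b := by
      funext i
      simp only [Polynomial.eval_add, Polynomial.eval_mul, Polynomial.eval_C,
        Polynomial.eval_X, Pi.add_apply, Pi.smul_apply, smul_eq_mul]
      ring
    rw [harg] at h1
    exact h1
  by_cases hψ0 : ψ = 0
  · exfalso
    obtain ⟨x, hxL, hxf⟩ := hx
    -- f does not vanish at a
    have haf : eval a f ≠ 0 := by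
      obtain ⟨c0, c1, hc⟩ := hdec x hxL
      by_cases hc1 : c1 = 0
      · subst hc1
        rw [hc] at hxf
        simp only [zero_smul, add_zero] at hxf
        have := eval_smul_of_isHomogeneous hf c0 a
        intro h
        rw [h, mul_zero] at this
        exact hxf this
      · exfalso
        have hrep : x.rep = c1 • ((c0 / c1) • a + b) := by
          rw [hc, smul_add, smul_smul]
          field_simp
        rw [hrep, eval_smul_of_isHomogeneous hf, ← hψ, hψ0] at hxf
        simp at hxf
    -- the other chart polynomial
    let χ : Polynomial ℂ :=
      aeval (fun i => Polynomial.C (a i) + Polynomial.X * Polynomial.C (b i)) f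
    have hχ : ∀ t : ℂ, χ.eval t = eval (a + t • b) f := by
      intro t
      have h1 := eval_aeval_poly
        (fun i => Polynomial.C (a i) + Polynomial.X * Polynomial.C (b i)) t f
      have harg : (fun i => Polynomial.eval t
          (Polynomial.C (a i) + Polynomial.X * Polynomial.C (b i))) = a + t • b := by
        funext i
        simp only [Polynomial.eval_add, Polynomial.eval_mul, Polynomial.eval_C,
          Polynomial.eval_X, Pi.add_apply, Pi.smul_apply, smul_eq_mul]
      rw [harg] at h1
      exact h1
    have hχroots : ∀ t : ℂ, t ≠ 0 → χ.IsRoot t := by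
      intro t ht
      show χ.eval t = 0
      rw [hχ]
      have : a + t • b = t • (t⁻¹ • a + b) := by
        rw [smul_add, smul_smul, mul_inv_cancel₀ ht, one_smul]
      rw [this, eval_smul_of_isHomogeneous hf, ← hψ, hψ0]
      simp
    have hχ0 : χ = 0 := by
      apply Polynomial.eq_zero_of_infinite_isRoot
      apply Set.Infinite.mono (s := {t : ℂ | t ≠ 0})
      · intro t ht; exact hχroots t ht
      · exact Set.infinite_of_finite_compl (by simp)
    have := hχ 0
    rw [hχ0] at this
    simp only [Polynomial.eval_zero, zero_smul, add_zero] at this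
    exact haf this.symm
  · -- ψ ≠ 0 : finitely many zeros
    have hroots : {s : ℂ | ψ.IsRoot s}.Finite := Polynomial.finite_setOf_isRoot hψ0
    apply Set.Finite.subset (hroots.image (fun s => Projectivization.mk ℂ (s • a + b)
      (hsb0 s)) |>.union (Set.finite_singleton (Projectivization.mk ℂ a ha0)))
    rintro z ⟨hzL, hzf⟩
    obtain ⟨c0, c1, hc⟩ := hdec z hzL
    by_cases hc1 : c1 = 0
    · right
      subst hc1
      simp only [zero_smul, add_zero] at hc
      have hc0 : c0 ≠ 0 := by
        rintro rfl
        rw [zero_smul] at hc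
        exact z.rep_nonzero hc
      rw [Set.mem_singleton_iff, ← mk_rep z, mk_eq_mk_iff']
      exact ⟨c0, hc.symm⟩
    · left
      have hrep : z.rep = c1 • ((c0 / c1) • a + b) := by
        rw [hc, smul_add, smul_smul]
        field_simp
      refine ⟨c0 / c1, ?_, ?_⟩
      · show ψ.eval (c0 / c1) = 0
        rw [hψ]
        have := hzf
        rw [VanishesAt, hrep, eval_smul_of_isHomogeneous hf] at this
        rcases mul_eq_zero.mp this with h | h
        · exact absurd h (pow_ne_zero _ hc1)
        · exact h
      · rw [← mk_rep z, mk_eq_mk_iff']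
        exact ⟨c1⁻¹, by rw [hrep, smul_smul, inv_mul_cancel₀ hc1, one_smul]⟩

lemma irred_closed_in_line {W : Submodule ℂ (Fin (d+1) → ℂ)} (hW : Module.finrank ℂ W = 2)
    {Y : Set (ProjSpace d)} (hY : IsIrredClosed Y) (hYL : Y ⊆ LinearSubvariety W)
    {p q : ProjSpace d} (hp : p ∈ Y) (hq : q ∈ Y) (hpq : p ≠ q) :
    Y = LinearSubvariety W := by
  obtain ⟨⟨S, hS, hYeq⟩, _, hirr⟩ := hY
  by_cases hall : ∀ f ∈ S, ∀ z ∈ LinearSubvariety W, VanishesAt f z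
  · refine Set.Subset.antisymm hYL fun z hz => ?_
    rw [hYeq]
    exact fun f hf => hall f hf z hz
  · exfalso
    push_neg at hall
    obtain ⟨f, hfS, x, hxL, hxf⟩ := hall
    obtain ⟨k, hk⟩ := hS f hfS
    have hYfin : Y.Finite := by
      apply Set.Finite.subset (line_finite_zeros hW hk ⟨x, hxL, hxf⟩)
      intro z hz
      refine ⟨hYL hz, ?_⟩
      rw [hYeq] at hz
      exact hz f hfS
    have hcov : Y ⊆ {p} ∪ (Y \ {p}) := by
      intro z hz
      by_cases hzp : z = p
      · exact Or.inl (by simp [hzp])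
      · exact Or.inr ⟨hz, by simp [hzp]⟩
    rcases hirr {p} (Y \ {p}) (isZarClosed_singleton p)
      ((hYfin.subset Set.diff_subset).isZarClosed) hcov with h | h
    · have := h hq
      rw [Set.mem_singleton_iff] at this
      exact hpq this.symm
    · exact (h hp).2 rfl

end Aux5
section Aux6
variable {d : ℕ}

lemma finrank_sup_span_singleton {U : Submodule ℂ (Fin (d+1) → ℂ)} {u : Fin (d+1) → ℂ}
    (hu : u ∉ U) :
    Module.finrank ℂ ↥(U ⊔ (ℂ ∙ u)) = Module.finrank ℂ U + 1 := by
  have hu0 : u ≠ 0 := fun h => hu (h ▸ U.zero_mem)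
  have hinf : U ⊓ (ℂ ∙ u) = ⊥ := by
    rw [eq_bot_iff]
    rintro w hw
    rw [Submodule.mem_inf] at hw
    obtain ⟨hwU, hwu⟩ := hw
    obtain ⟨c, hc⟩ := Submodule.mem_span_singleton.mp hwu
    rcases eq_or_ne c 0 with rfl | hc0
    · rw [← hc, zero_smul]; exact Submodule.zero_mem ⊥
    · exfalso
      apply hu
      have : u = c⁻¹ • w := by rw [← hc, smul_smul, inv_mul_cancel₀ hc0, one_smul]
      rw [this]
      exact Submodule.smul_mem _ _ hwU
  have h := Submodule.finrank_sup_add_finrank_inf_eq U (ℂ ∙ u)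
  rw [hinf, finrank_bot, finrank_span_singleton hu0] at h
  omega

lemma rep_not_mem_submodule_of_ne {p q : ProjSpace d} (h : q ≠ p) :
    q.rep ∉ p.submodule := by
  rw [submodule_eq]
  intro hmem
  obtain ⟨c, hc⟩ := Submodule.mem_span_singleton.mp hmem
  apply h
  rw [← mk_rep q, ← mk_rep p, mk_eq_mk_iff']
  exact ⟨c, hc⟩

lemma submodule_ne_bot (p : ProjSpace d) : p.submodule ≠ ⊥ := by
  rw [submodule_eq, Submodule.span_singleton_eq_bot.ne]
  exact p.rep_nonzero

end Aux6

section Aux7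
variable {d : ℕ}

lemma linearSubvariety_mono {U U' : Submodule ℂ (Fin (d+1) → ℂ)} (h : U ≤ U') :
    LinearSubvariety U ⊆ LinearSubvariety U' := by
  intro x hx
  rw [mem_linearSubvariety] at hx ⊢
  exact h hx

lemma rep_mem_submodule (p : ProjSpace d) : p.rep ∈ p.submodule := by
  rw [submodule_eq]
  exact Submodule.mem_span_singleton_self _

lemma mem_linearSubvariety_of_le {p : ProjSpace d} {W : Submodule ℂ (Fin (d+1) → ℂ)}
    (h : p.submodule ≤ W) : p ∈ LinearSubvariety W := by
  rw [mem_linearSubvariety]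
  exact h (rep_mem_submodule p)

end Aux7
/-- An irreducible two-dimensional cone with two distinct vertices is a projective
plane. -/
theorem stmt_3 {d : ℕ} (Z : Set (ProjSpace d)) (v v' : ProjSpace d)
    (hirr : IsIrredClosed Z) (hdim : HasDim Z 2)
    (hcone : IsConeWithVertex Z v) (hcone' : IsConeWithVertex Z v') (hne : v' ≠ v) :
    IsPlane Z := by
  obtain ⟨hvZ, hlinev⟩ := hcone
  obtain ⟨hv'Z, hlinev'⟩ := hcone'
  set W2 := v.submodule ⊔ v'.submodule with hW2def
  have hv'v : v'.rep ∉ v.submodule := rep_not_mem_submodule_of_ne hne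
  have hW2 : Module.finrank ℂ W2 = 2 := by
    rw [hW2def, submodule_eq v', _root_.finrank_sup_span_singleton hv'v, finrank_submodule]
  have hLZ : LinearSubvariety W2 ⊆ Z := hlinev v' hv'Z
  by_cases hZL : Z ⊆ LinearSubvariety W2
  · exfalso
    obtain ⟨c, hci, hmono, hlast⟩ := hdim.1
    have h01 : c 0 < c 1 := hmono (by decide)
    have h12 : c 1 < c (Fin.last 2) := hmono (by decide)
    have hc2L : c (Fin.last 2) ⊆ LinearSubvariety W2 := fun x hx => hZL (hlast hx)
    obtain ⟨p, hp⟩ := (hci 0).2.1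
    obtain ⟨q, hq1, hq0⟩ := Set.exists_of_ssubset h01
    have hc1 : c 1 = LinearSubvariety W2 :=
      irred_closed_in_line hW2 (hci 1) (h12.le.trans hc2L) (h01.le hp) hq1
        (fun h => hq0 (h ▸ hp))
    exact (LT.lt.not_ge h12) (hc1 ▸ hc2L)
  · obtain ⟨z0, hz0Z, hz0L⟩ := Set.not_subset.mp hZL
    have hz0W2 : z0.rep ∉ W2 := fun h => hz0L (mem_linearSubvariety.mpr h)
    set W3 := W2 ⊔ z0.submodule with hW3def
    have hW3 : Module.finrank ℂ W3 = 3 := by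
      rw [hW3def, submodule_eq z0, _root_.finrank_sup_span_singleton hz0W2, hW2]
    have hPZ : LinearSubvariety W3 ⊆ Z := by
      intro x hx
      have hxW3 : x.rep ∈ W3 := mem_linearSubvariety.mp hx
      obtain ⟨p, hp, q, hq, hpq⟩ := Submodule.mem_sup.mp hxW3
      obtain ⟨p1, hp1, p2, hp2, hp12⟩ := Submodule.mem_sup.mp hp
      rw [submodule_eq] at hp1 hp2
      rw [submodule_eq] at hq
      obtain ⟨α, hα⟩ := Submodule.mem_span_singleton.mp hp1
      obtain ⟨β, hβ⟩ := Submodule.mem_span_singleton.mp hp2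
      obtain ⟨γ, hγ⟩ := Submodule.mem_span_singleton.mp hq
      set u := α • v.rep + γ • z0.rep with hu_def
      have hxu : x.rep = u + β • v'.rep := by
        rw [hu_def, ← hpq, ← hp12, ← hα, ← hβ, ← hγ]
        abel
      by_cases hu : u = 0
      · have hxb : x.rep = β • v'.rep := by rw [hxu, hu, zero_add]
        have hxv' : x = v' := by
          rw [← mk_rep x, ← mk_rep v', mk_eq_mk_iff']
          exact ⟨β, hxb.symm⟩
        rw [hxv']
        exact hv'Z
      · have hwZ : Projectivization.mk ℂ u hu ∈ Z := by
          apply hlinev z0 hz0Z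
          show Projectivization.mk ℂ u hu ∈ LinearSubvariety (v.submodule ⊔ z0.submodule)
          rw [mk_mem_linearSubvariety]
          apply Submodule.mem_sup.mpr
          refine ⟨α • v.rep, ?_, γ • z0.rep, ?_, rfl⟩
          · rw [submodule_eq]
            exact Submodule.smul_mem _ _ (Submodule.mem_span_singleton_self _)
          · rw [submodule_eq]
            exact Submodule.smul_mem _ _ (Submodule.mem_span_singleton_self _)
        apply hlinev' _ hwZ
        show x ∈ LinearSubvariety (v'.submodule ⊔ (Projectivization.mk ℂ u hu).submodule)
        rw [mem_linearSubvariety]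
        apply Submodule.mem_sup.mpr
        refine ⟨β • v'.rep, ?_, u, ?_, ?_⟩
        · rw [submodule_eq]
          exact Submodule.smul_mem _ _ (Submodule.mem_span_singleton_self _)
        · rw [submodule_mk]
          exact Submodule.mem_span_singleton_self _
        · rw [hxu]
          abel
    by_cases hZP : Z ⊆ LinearSubvariety W3
    · exact ⟨W3, hW3, Set.Subset.antisymm hZP hPZ⟩
    · exfalso
      obtain ⟨z1, hz1Z, hz1P⟩ := Set.not_subset.mp hZP
      apply hdim.2
      refine ⟨![LinearSubvariety v.submodule, LinearSubvariety W2, LinearSubvariety W3, Z],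
        ?_, ?_, ?_⟩
      · intro i
        fin_cases i
        · exact isIrredClosed_linearSubvariety (submodule_ne_bot v)
        · exact isIrredClosed_linearSubvariety
            (fun h => submodule_ne_bot v (by rw [eq_bot_iff, ← h]; exact le_sup_left))
        · exact isIrredClosed_linearSubvariety
            (fun h => submodule_ne_bot v
              (by rw [eq_bot_iff, ← h]; exact le_trans le_sup_left le_sup_left))
        · exact hirr
      · rw [Fin.strictMono_iff_lt_succ]
        intro i
        fin_cases i
        · show LinearSubvariety v.submodule < LinearSubvariety W2
          refine lt_of_le_of_ne (linearSubvariety_mono le_sup_left) ?_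
          intro h
          have hv'mem : v' ∈ LinearSubvariety W2 := mem_linearSubvariety_of_le le_sup_right
          rw [← h, ← singleton_eq_linearSubvariety, Set.mem_singleton_iff] at hv'mem
          exact hne hv'mem
        · show LinearSubvariety W2 < LinearSubvariety W3
          refine lt_of_le_of_ne (linearSubvariety_mono le_sup_left) ?_
          intro h
          have hz0mem : z0 ∈ LinearSubvariety W3 := mem_linearSubvariety_of_le le_sup_right
          rw [← h] at hz0mem
          exact hz0L hz0mem
        · show LinearSubvariety W3 < Z
          exact lt_of_le_of_ne hPZ (fun h => hz1P (h ▸ hz1Z))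
      · show Z ⊆ Z
        exact subset_rfl
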